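/- In a finite two-player zero-sum sequential game of perfect information with realizations partitioned into R_w, R_b, and R_wb, either Black has a winning strategy or White has a non-losing strategy. -/

import Mathlib

/-- Possible outcomes of a realization (complete play) of the game. -/
inductive Outcome where
  | whiteWins  -- realization lies in R_w
  | blackWins  -- realization lies in R_b
  | draw       -- realization lies in R_wb

/-- Black has a winning strategy for the remaining `k` pairs of moves after
history `hist`: for every White move there is a Black reply, etc., such that
the resulting realization lies in `R_b`. -/
def BlackWinsFrom {Move : Type} (outcome : List Move → Outcome) :
    ℕ → List Move → Prop
  | 0, hist => outcome hist = Outcome.blackWins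
  | k + 1, hist => ∀ w : Move, ∃ b : Move,
      BlackWinsFrom outcome k (hist ++ [w, b])

/-- White has a non-losing strategy for the remaining `k` pairs of moves after
history `hist`: there is a White move such that for every Black reply, etc.,
the resulting realization lies in `R_w ∪ R_wb`. -/
def WhiteNonLosesFrom {Move : Type} (outcome : List Move → Outcome) :
    ℕ → List Move → Prop
  | 0, hist => outcome hist = Outcome.whiteWins ∨ outcome hist = Outcome.draw
  | k + 1, hist => ∃ w : Move, ∀ b : Move,
      WhiteNonLosesFrom outcome k (hist ++ [w, b])

/-! Backward induction: negating Black's quantifier prefix `∀ w ∃ b` gives White's `∃ w ∀ b`,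
and at a complete play "not in `R_b`" means "in `R_w ∪ R_wb`". -/

theorem Outcome.ne_blackWins_iff (o : Outcome) :
    o ≠ Outcome.blackWins ↔ o = Outcome.whiteWins ∨ o = Outcome.draw := by
  cases o <;> simp

theorem not_blackWinsFrom_iff_whiteNonLosesFrom {Move : Type}
    (outcome : List Move → Outcome) (k : ℕ) (hist : List Move) :
    ¬ BlackWinsFrom outcome k hist ↔ WhiteNonLosesFrom outcome k hist := by
  induction k generalizing hist with
  | zero => exact (outcome hist).ne_blackWins_iff
  | succ k ih => simp only [BlackWinsFrom, WhiteNonLosesFrom, not_forall, not_exists, ih]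

theorem black_wins_or_white_non_loses_general
    {Move : Type}
    (n : ℕ) (outcome : List Move → Outcome) :
    BlackWinsFrom outcome n [] ∨ WhiteNonLosesFrom outcome n [] :=
  or_iff_not_imp_left.2 (not_blackWinsFrom_iff_whiteNonLosesFrom outcome n []).1

/-- In a finite two-player zero-sum sequential game of perfect information,
either Black has a winning strategy or White has a non-losing strategy. -/
theorem black_wins_or_white_non_loses
    {Move : Type} [Fintype Move] [Nonempty Move]
    (n : ℕ) (outcome : List Move → Outcome) :
    BlackWinsFrom outcome n [] ∨ WhiteNonLosesFrom outcome n [] :=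
  black_wins_or_white_non_loses_general n outcome
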